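/- Let $\alpha > 0$, $\omega, \varepsilon > 0$, and $\psi_1, \dots, \psi_N > 0$. Then the unique minimizer of $f(t) = \sum_{n=1}^N \psi_n t_n^{-\alpha/2}$ over the set $\{t \in \mathbb{R}_{>0}^N : \omega \sum_{n=1}^N t_n = \varepsilon\}$ is given by $t_n^* = \psi_n^{2/(\alpha+2)} \cdot \left(\frac{\omega}{\varepsilon}\sum_{k=1}^N \psi_k^{2/(\alpha+2)}\right)^{-1}$. -/

import Mathlib

/-!
For `β = α / 2 > 0` the function `x ↦ x ^ (-β)` lies strictly above each of its tangent lines on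
`(0, ∞)`, by Bernoulli's inequality. The point `t*` satisfies the Lagrange condition: with
`e = 2 / (α + 2) = 1 / (β + 1)`, the derivatives `-β ψₙ (t*ₙ) ^ (-β - 1)` all equal the same
constant. Bounding each summand `ψₙ tₙ ^ (-β)` below by its tangent at `t*ₙ` therefore gives
`f t ≥ f t* - const · (∑ tₙ - ∑ t*ₙ) = f t*` on the constraint set, strictly unless `t = t*`.
-/

open Finset Real

theorem one_sub_mul_sub_one_lt_rpow_neg {β u : ℝ} (hβ : 0 < β) (hu : 0 < u) (hu1 : u ≠ 1) :
    1 - β * (u - 1) < u ^ (-β) := by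
  have hw : u⁻¹ ≠ 1 := by simpa using hu1
  have bernoulli := one_add_mul_self_lt_rpow_one_add (s := u⁻¹ - 1) (p := 1 + β)
    (by linarith [inv_pos.mpr hu]) (sub_ne_zero.mpr hw) (by linarith)
  rw [add_sub_cancel, rpow_add (inv_pos.mpr hu), rpow_one, inv_rpow hu.le,
    ← rpow_neg hu.le] at bernoulli
  have := mul_lt_mul_of_pos_right bernoulli hu
  field_simp at this
  linarith

theorem rpow_neg_tangent_lt {β c x : ℝ} (hβ : 0 < β) (hc : 0 < c) (hx : 0 < x) (hxc : x ≠ c) :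
    c ^ (-β) - β * c ^ (-β - 1) * (x - c) < x ^ (-β) := by
  have hu : x / c ≠ 1 := by rwa [ne_eq, div_eq_one_iff_eq hc.ne']
  calc c ^ (-β) - β * c ^ (-β - 1) * (x - c)
      = c ^ (-β) * (1 - β * (x / c - 1)) := by rw [rpow_sub hc, rpow_one]; field_simp
    _ < c ^ (-β) * (x / c) ^ (-β) := by
        gcongr
        exact one_sub_mul_sub_one_lt_rpow_neg hβ (div_pos hx hc) hu
    _ = x ^ (-β) := by rw [div_rpow hx.le hc.le]; field_simp

theorem rpow_neg_tangent_le {β c x : ℝ} (hβ : 0 < β) (hc : 0 < c) (hx : 0 < x) :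
    c ^ (-β) - β * c ^ (-β - 1) * (x - c) ≤ x ^ (-β) := by
  rcases eq_or_ne x c with rfl | hxc
  · simp
  · exact (rpow_neg_tangent_lt hβ hc hx hxc).le

theorem sum_mul_rpow_neg_lt_of_mul_rpow_eq {ι : Type*} [Fintype ι] {β K : ℝ} {ψ c t : ι → ℝ}
    (hβ : 0 < β) (hψ : ∀ n, 0 < ψ n) (hc : ∀ n, 0 < c n) (ht : ∀ n, 0 < t n)
    (hK : ∀ n, ψ n * c n ^ (-β - 1) = K) (hsum : ∑ n, t n = ∑ n, c n) (hne : t ≠ c) :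
    ∑ n, ψ n * c n ^ (-β) < ∑ n, ψ n * t n ^ (-β) := by
  obtain ⟨m, hm⟩ := Function.ne_iff.mp hne
  have tangent (n : ι) : ψ n * (c n ^ (-β) - β * c n ^ (-β - 1) * (t n - c n)) ≤
      ψ n * t n ^ (-β) :=
    mul_le_mul_of_nonneg_left (rpow_neg_tangent_le hβ (hc n) (ht n)) (hψ n).le
  have tangent_m : ψ m * (c m ^ (-β) - β * c m ^ (-β - 1) * (t m - c m)) < ψ m * t m ^ (-β) :=
    mul_lt_mul_of_pos_left (rpow_neg_tangent_lt hβ (hc m) (ht m) hm) (hψ m)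
  have tangent_eq (n : ι) : ψ n * (c n ^ (-β) - β * c n ^ (-β - 1) * (t n - c n)) =
      ψ n * c n ^ (-β) - β * K * (t n - c n) := by
    rw [← hK n]; ring
  calc ∑ n, ψ n * c n ^ (-β)
      = ∑ n, (ψ n * c n ^ (-β) - β * K * (t n - c n)) := by
        rw [sum_sub_distrib, ← mul_sum, sum_sub_distrib, hsum, sub_self, mul_zero, sub_zero]
    _ < ∑ n, ψ n * t n ^ (-β) :=
        sum_lt_sum (fun n _ => tangent_eq n ▸ tangent n) ⟨m, mem_univ m, tangent_eq m ▸ tangent_m⟩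

theorem mul_rpow_inv_add_one_mul_rpow_neg_sub_one {β ψ C : ℝ} (hψ : 0 < ψ) (hC : 0 < C)
    (hβ : β + 1 ≠ 0) : ψ * (ψ ^ (β + 1)⁻¹ * C) ^ (-β - 1) = C ^ (-β - 1) := by
  rw [mul_rpow (rpow_nonneg hψ.le _) hC.le, ← rpow_mul hψ.le,
    show (β + 1)⁻¹ * (-β - 1) = -1 by field_simp; ring, rpow_neg_one, mul_inv_cancel_left₀ hψ.ne']

theorem stmt_5 (N : ℕ) (hN : 0 < N) (α ω ε : ℝ) (hα : 0 < α) (hω : 0 < ω) (hε : 0 < ε)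
    (ψ : Fin N → ℝ) (hψ : ∀ n, 0 < ψ n) :
    let tstar : Fin N → ℝ :=
      fun n => ψ n ^ ((2:ℝ)/(α+2)) * ((ω/ε) * ∑ k, ψ k ^ ((2:ℝ)/(α+2)))⁻¹
    (∀ n, 0 < tstar n) ∧ ω * ∑ n, tstar n = ε ∧
    (∀ t : Fin N → ℝ, (∀ n, 0 < t n) → ω * ∑ n, t n = ε →
      (∑ n, ψ n * tstar n ^ (-(α/2))) ≤ ∑ n, ψ n * t n ^ (-(α/2))) ∧
    (∀ t : Fin N → ℝ, (∀ n, 0 < t n) → ω * ∑ n, t n = ε →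
      (∑ n, ψ n * t n ^ (-(α/2))) = (∑ n, ψ n * tstar n ^ (-(α/2))) → t = tstar) := by
  intro tstar
  have : Nonempty (Fin N) := ⟨⟨0, hN⟩⟩
  have hS : 0 < ∑ k, ψ k ^ ((2:ℝ) / (α + 2)) :=
    sum_pos (fun k _ => rpow_pos_of_pos (hψ k) _) univ_nonempty
  have hC : 0 < ((ω / ε) * ∑ k, ψ k ^ ((2:ℝ) / (α + 2)))⁻¹ := by positivity
  have hpos (n : Fin N) : 0 < tstar n := mul_pos (rpow_pos_of_pos (hψ n) _) hC
  have hsum : ω * ∑ n, tstar n = ε := by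
    simp only [tstar, ← sum_mul]
    field_simp
  have hK (n : Fin N) := mul_rpow_inv_add_one_mul_rpow_neg_sub_one (hψ n) hC
    (by positivity : α / 2 + 1 ≠ 0)
  rw [show (α / 2 + 1)⁻¹ = (2:ℝ) / (α + 2) by field_simp] at hK
  have hlt (t : Fin N → ℝ) (ht : ∀ n, 0 < t n) (hts : ω * ∑ n, t n = ε) (hne : t ≠ tstar) :=
    sum_mul_rpow_neg_lt_of_mul_rpow_eq (by positivity) hψ hpos ht hK
      (mul_left_cancel₀ hω.ne' (hts.trans hsum.symm)) hne
  refine ⟨hpos, hsum, fun t ht hts => ?_, fun t ht hts heq => ?_⟩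
  · rcases eq_or_ne t tstar with rfl | hne
    · exact le_rfl
    · exact (hlt t ht hts hne).le
  · by_contra hne
    exact (hlt t ht hts hne).ne' heq
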